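/- arXiv:1505.02086 — 3 statements merged into one kernel-verified Lean document; each statement's English description precedes it below -/
import Mathlib

section
/- Let c > 0 and let G be a finite connected simple graph with at least 2 vertices. Let q = sr(K_G) and let f be a positive eigenvector with K_G f = q f (such f exists and q > 0 by Perron–Frobenius). Let C be a nonempty subset of V(G), h(u) the graph distance from u to C, N_i(u) = {v adjacent to u : h(v) = h(u) + i} and d_i(u) = |N_i(u)| for i ∈ {−1, 0, +1}, and ω(u) = f(u)·q^{h(u)}. Then q^{-1}·Σ_u d_0(u)ω(u) + q^{-2}·Σ_u d_{−1}(u)ω(u) = Σ_u [d_0(u) + d_{−1}(u) + c]·ω(u), where all sums range over u ∈ V(G). -/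
/-! Write `ω u = f u * q ^ h u`. Multiplying the eigenvalue equation
`∑_{v ∼ u} f v = q (c + d(u)) f u` by `q ^ (h u + 1)` and summing over `u`, the left-hand side
becomes, after exchanging the order of summation, `∑_v f v ∑_{u ∼ v} q ^ (h u + 1)`. Since `h`
changes by at most one along an edge, the inner sum is `(d₊ q² + d₀ q + d₋) q ^ h v`. Splitting
`d(u) = d₊ + d₀ + d₋`, the `d₊` terms cancel, and dividing by `q²` gives the identity; `q > 0`
because `G` has an edge and `f > 0`. Only the fact that `h` is 1-Lipschitz along edges is used. -/

/-- `K_G = D⁻¹ A_G` where `D` is the diagonal matrix with entries `c + d(u,G)`. -/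
noncomputable def Kg {V : Type} [Fintype V] [DecidableEq V] (c : ℝ)
    (G : SimpleGraph V) [DecidableRel G.Adj] : Matrix V V ℝ :=
  Matrix.of fun u v => (G.adjMatrix ℝ) u v / (c + (G.degree u : ℝ))

/-- The spectral radius of a real matrix: the largest modulus of a (complex) eigenvalue. -/
noncomputable def sr {V : Type} [Fintype V] [DecidableEq V] (A : Matrix V V ℝ) : ℝ :=
  sSup ((fun z : ℂ => ‖z‖) '' spectrum ℂ (A.map Complex.ofReal))

open Finset Matrix

theorem Finset.sum_comp_add_one_of_trichotomy {ι M : Type*} [AddCommMonoid M] (s : Finset ι)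
    (h : ι → ℕ) (a : ℕ) (F : ℕ → M) (hs : ∀ i ∈ s, h i = a + 1 ∨ h i = a ∨ h i + 1 = a) :
    ∑ i ∈ s, F (h i + 1) = #{i ∈ s | h i = a + 1} • F (a + 2) + #{i ∈ s | h i = a} • F (a + 1)
      + #{i ∈ s | h i + 1 = a} • F a := by
  have hsplit : ∀ i ∈ s, F (h i + 1) = (if h i = a + 1 then F (a + 2) else 0)
      + (if h i = a then F (a + 1) else 0) + (if h i + 1 = a then F a else 0) := by
    intro i hi
    rcases hs i hi with hi | hi | hi
    · rw [if_pos hi, if_neg (by omega), if_neg (by omega), hi, add_zero, add_zero]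
    · rw [if_neg (by omega), if_pos hi, if_neg (by omega), hi, zero_add, add_zero]
    · rw [if_neg (by omega), if_neg (by omega), if_pos hi, hi, zero_add, zero_add]
  simp only [sum_congr rfl hsplit, sum_add_distrib, ← sum_filter, sum_const]

namespace SimpleGraph

noncomputable def finsetDist {V : Type*} (G : SimpleGraph V) (C : Finset V) (u : V) : ℕ :=
  sInf {d : ℕ | ∃ v ∈ C, G.dist u v = d}

theorem finsetDist_le_add_one_of_adj {V : Type*} {G : SimpleGraph V} {C : Finset V} {u v : V}
    (huv : G.Adj u v) : G.finsetDist C v ≤ G.finsetDist C u + 1 := by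
  rcases C.eq_empty_or_nonempty with rfl | ⟨w, hw⟩
  · simp [finsetDist]
  obtain ⟨w', hw', hdist⟩ :=
    Nat.sInf_mem (⟨_, w, hw, rfl⟩ : {d : ℕ | ∃ x ∈ C, G.dist u x = d}.Nonempty)
  have hstep : G.dist w' v ≤ G.dist w' u + 1 := by
    rcases huv.diff_dist_adj (u := w') with h | h | h <;> omega
  calc G.finsetDist C v ≤ G.dist v w' := Nat.sInf_le ⟨w', hw', rfl⟩
    _ ≤ G.dist u w' + 1 := by rwa [dist_comm, G.dist_comm (u := u)]
    _ = G.finsetDist C u + 1 := by rw [hdist]; rfl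

theorem level_trichotomy_of_adj {V : Type*} {G : SimpleGraph V} {h : V → ℕ}
    (hh : ∀ u v, G.Adj u v → h v ≤ h u + 1) {u v : V} (huv : G.Adj u v) :
    h v = h u + 1 ∨ h v = h u ∨ h v + 1 = h u := by
  have := hh u v huv
  have := hh v u huv.symm
  omega

variable {V : Type*} [Fintype V] (G : SimpleGraph V) [DecidableRel G.Adj]

theorem sum_mul_sum_neighborFinset_comm {R : Type*} [CommSemiring R] (g f : V → R) :
    ∑ u, g u * ∑ v ∈ G.neighborFinset u, f v = ∑ v, f v * ∑ u ∈ G.neighborFinset v, g u := by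
  classical
  calc ∑ u, g u * ∑ v ∈ G.neighborFinset u, f v = g ⬝ᵥ (G.adjMatrix R *ᵥ f) := by
        simp [dotProduct]
    _ = (g ᵥ* G.adjMatrix R) ⬝ᵥ f := Matrix.dotProduct_mulVec _ _ _
    _ = _ := by simp [dotProduct, mul_comm]

section LevelFunction

variable (h : V → ℕ)

theorem degree_eq_card_levels (hh : ∀ u v, G.Adj u v → h v ≤ h u + 1) (u : V) :
    G.degree u = #{v ∈ G.neighborFinset u | h v = h u + 1} + #{v ∈ G.neighborFinset u | h v = h u}
      + #{v ∈ G.neighborFinset u | h v + 1 = h u} := by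
  have := (G.neighborFinset u).sum_comp_add_one_of_trichotomy h (h u) (fun _ ↦ 1)
    fun v hv ↦ level_trichotomy_of_adj hh ((G.mem_neighborFinset u v).mp hv)
  simpa using this

theorem sum_neighborFinset_pow_level (hh : ∀ u v, G.Adj u v → h v ≤ h u + 1) {R : Type*}
    [CommSemiring R] (q : R) (u : V) :
    ∑ v ∈ G.neighborFinset u, q ^ (h v + 1) =
      #{v ∈ G.neighborFinset u | h v = h u + 1} * q ^ (h u + 2)
      + #{v ∈ G.neighborFinset u | h v = h u} * q ^ (h u + 1)
      + #{v ∈ G.neighborFinset u | h v + 1 = h u} * q ^ h u := by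
  simpa only [nsmul_eq_mul] using
    (G.neighborFinset u).sum_comp_add_one_of_trichotomy h (h u) (q ^ ·)
      fun v hv ↦ level_trichotomy_of_adj hh ((G.mem_neighborFinset u v).mp hv)

theorem sum_pow_level_mul_sum_neighborFinset (hh : ∀ u v, G.Adj u v → h v ≤ h u + 1)
    {R : Type*} [CommSemiring R] (q : R) (f : V → R) :
    ∑ u, q ^ (h u + 1) * ∑ v ∈ G.neighborFinset u, f v =
      ∑ u, (#{v ∈ G.neighborFinset u | h v = h u + 1} * q ^ 2
        + #{v ∈ G.neighborFinset u | h v = h u} * q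
        + #{v ∈ G.neighborFinset u | h v + 1 = h u}) * (f u * q ^ h u) := by
  rw [sum_mul_sum_neighborFinset_comm]
  refine sum_congr rfl fun u _ ↦ ?_
  rw [G.sum_neighborFinset_pow_level h hh]
  ring

theorem weighted_level_identity (hh : ∀ u v, G.Adj u v → h v ≤ h u + 1) {R : Type*} [Field R]
    {c q : R} (hq : q ≠ 0) (f : V → R)
    (hf : ∀ u, ∑ v ∈ G.neighborFinset u, f v = q * ((c + G.degree u) * f u)) :
    q⁻¹ * ∑ u, (#{v ∈ G.neighborFinset u | h v = h u} : R) * (f u * q ^ h u)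
      + (q ^ 2)⁻¹ * ∑ u, (#{v ∈ G.neighborFinset u | h v + 1 = h u} : R) * (f u * q ^ h u)
      = ∑ u, ((#{v ∈ G.neighborFinset u | h v = h u} : R)
          + #{v ∈ G.neighborFinset u | h v + 1 = h u} + c) * (f u * q ^ h u) := by
  set dp : V → R := fun u ↦ #{v ∈ G.neighborFinset u | h v = h u + 1}
  set d0 : V → R := fun u ↦ #{v ∈ G.neighborFinset u | h v = h u}
  set dm : V → R := fun u ↦ #{v ∈ G.neighborFinset u | h v + 1 = h u}
  set ω : V → R := fun u ↦ f u * q ^ h u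
  change q⁻¹ * ∑ u, d0 u * ω u + (q ^ 2)⁻¹ * ∑ u, dm u * ω u = ∑ u, (d0 u + dm u + c) * ω u
  have hdeg (u : V) : (G.degree u : R) = dp u + d0 u + dm u := by
    rw [G.degree_eq_card_levels h hh u]
    push_cast
    rfl
  have key : ∑ u, (q ^ 2 * ((d0 u + dm u + c) * ω u) + q ^ 2 * (dp u * ω u))
      = ∑ u, ((q * (d0 u * ω u) + dm u * ω u) + q ^ 2 * (dp u * ω u)) := by
    calc _ = ∑ u, q ^ (h u + 1) * ∑ v ∈ G.neighborFinset u, f v := by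
          refine sum_congr rfl fun u _ ↦ ?_
          rw [hf u, hdeg u]
          ring
      _ = _ := by
          rw [G.sum_pow_level_mul_sum_neighborFinset h hh]
          refine sum_congr rfl fun u _ ↦ ?_
          ring
  rw [sum_add_distrib, sum_add_distrib, add_left_inj, ← mul_sum, sum_add_distrib, ← mul_sum] at key
  rw [← mul_right_inj' (pow_ne_zero 2 hq), key]
  field_simp

end LevelFunction

end SimpleGraph

open SimpleGraph

theorem Kg_mulVec_apply {V : Type} [Fintype V] [DecidableEq V] (c : ℝ) (G : SimpleGraph V)
    [DecidableRel G.Adj] (f : V → ℝ) (u : V) :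
    (Kg c G *ᵥ f) u = (∑ v ∈ G.neighborFinset u, f v) / (c + G.degree u) := by
  rw [← adjMatrix_mulVec_apply, Matrix.mulVec, Matrix.mulVec, dotProduct, dotProduct, sum_div]
  simp only [Kg, Matrix.of_apply, div_mul_eq_mul_div]

theorem sum_neighborFinset_eq_of_Kg_mulVec_eq_smul {V : Type} [Fintype V] [DecidableEq V] {c : ℝ}
    {G : SimpleGraph V} [DecidableRel G.Adj] {q : ℝ} {f : V → ℝ} (heig : Kg c G *ᵥ f = q • f)
    {u : V} (hu : c + G.degree u ≠ 0) :
    ∑ v ∈ G.neighborFinset u, f v = q * ((c + G.degree u) * f u) := by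
  have := congrFun heig u
  rw [Kg_mulVec_apply, Pi.smul_apply, smul_eq_mul, div_eq_iff hu] at this
  linear_combination this

theorem pos_of_Kg_mulVec_eq_smul {V : Type} [Fintype V] [DecidableEq V] {c : ℝ} (hc : 0 < c)
    {G : SimpleGraph V} [DecidableRel G.Adj] {q : ℝ} {f : V → ℝ} (hf : ∀ v, 0 < f v)
    (heig : Kg c G *ᵥ f = q • f) {u v : V} (huv : G.Adj u v) : 0 < q := by
  have hdeg : 0 < c + G.degree u := by positivity
  have hsum : 0 < ∑ w ∈ G.neighborFinset u, f w :=
    sum_pos (fun w _ ↦ hf w) ⟨v, (G.mem_neighborFinset u v).mpr huv⟩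
  rw [sum_neighborFinset_eq_of_Kg_mulVec_eq_smul heig hdeg.ne'] at hsum
  exact pos_of_mul_pos_left hsum (mul_pos hdeg (hf u)).le

theorem weighted_perron_identity_general
    {V : Type} [Fintype V] [DecidableEq V] (c : ℝ) (hc : 0 < c)
    (G : SimpleGraph V) [DecidableRel G.Adj]
    (hconn : G.Connected) (hcard : 2 ≤ Fintype.card V)
    (q : ℝ)
    (f : V → ℝ) (hf : ∀ v, 0 < f v)
    (heig : (Kg c G).mulVec f = q • f)
    (C : Finset V) :
    let h : V → ℕ := fun u => sInf {d : ℕ | ∃ v ∈ C, G.dist u v = d}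
    let ω : V → ℝ := fun u => f u * q ^ (h u)
    let d0 : V → ℕ := fun u => ((G.neighborFinset u).filter (fun v => h v = h u)).card
    let dm : V → ℕ := fun u => ((G.neighborFinset u).filter (fun v => h v + 1 = h u)).card
    q⁻¹ * (∑ u, (d0 u : ℝ) * ω u) + (q ^ 2)⁻¹ * (∑ u, (dm u : ℝ) * ω u)
      = ∑ u, ((d0 u : ℝ) + (dm u : ℝ) + c) * ω u := by
  intro h ω d0 dm
  have hh : ∀ u v, G.Adj u v → h v ≤ h u + 1 := fun _ _ ↦ finsetDist_le_add_one_of_adj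
  have : Nontrivial V := Fintype.one_lt_card_iff_nontrivial.mp hcard
  obtain ⟨u⟩ := hconn.nonempty
  obtain ⟨v, huv⟩ := hconn.preconnected.exists_adj_of_nontrivial u
  have hq0 : 0 < q := pos_of_Kg_mulVec_eq_smul hc hf heig huv
  exact G.weighted_level_identity h hh hq0.ne' f
    fun u ↦ sum_neighborFinset_eq_of_Kg_mulVec_eq_smul heig (by positivity)

/-- the weighted identity `q⁻¹ Σ d₀(u)ω(u) + q⁻² Σ d₋₁(u)ω(u)
= Σ (d₀(u)+d₋₁(u)+c) ω(u)` for a connected graph with at least two vertices,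
a Perron eigenvector f (K_G f = q f, f > 0, q = sr(K_G)), a nonempty set C of
vertices, h(u) the graph distance from u to C, and ω(u) = f(u) q^{h(u)}. -/
theorem weighted_perron_identity
    {V : Type} [Fintype V] [DecidableEq V] (c : ℝ) (hc : 0 < c)
    (G : SimpleGraph V) [DecidableRel G.Adj]
    (hconn : G.Connected) (hcard : 2 ≤ Fintype.card V)
    (q : ℝ) (hq : q = sr (Kg c G))
    (f : V → ℝ) (hf : ∀ v, 0 < f v)
    (heig : (Kg c G).mulVec f = q • f)
    (C : Finset V) (hC : C.Nonempty) :
    let h : V → ℕ := fun u => sInf {d : ℕ | ∃ v ∈ C, G.dist u v = d}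
    let ω : V → ℝ := fun u => f u * q ^ (h u)
    let d0 : V → ℕ := fun u => ((G.neighborFinset u).filter (fun v => h v = h u)).card
    let dm : V → ℕ := fun u => ((G.neighborFinset u).filter (fun v => h v + 1 = h u)).card
    q⁻¹ * (∑ u, (d0 u : ℝ) * ω u) + (q ^ 2)⁻¹ * (∑ u, (dm u : ℝ) * ω u)
      = ∑ u, ((d0 u : ℝ) + (dm u : ℝ) + c) * ω u :=
  weighted_perron_identity_general c hc G hconn hcard q f hf heig C
end

section
/- Let c > 0 and let G be a finite tree (a connected acyclic simple graph). Then sr(K_G) < 1/√(1+c). -/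
/-!
Let `K x = μ x` with `x ≠ 0` and put `a u = ‖x u‖`. The eigenvalue equation gives
`‖μ‖ ∑ (c + d u) (a u)² ≤ ∑_{u ~ v} a u a v`, the sum running over ordered adjacent pairs, and
`2 √(1 + c) a u a v ≤ (a u)² + (a v)² + c min ((a u)², (a v)²)`. In a tree rooted at `r` the
minimum over an edge is at most the value at its endpoint farther from `r`, and every vertex
other than `r` is the far endpoint of exactly one edge. Hence
`√(1 + c) ∑_{u ~ v} a u a v ≤ ∑ (c + d u) (a u)² - c (a r)²`, and a root with `a r ≠ 0` gives
`√(1 + c) ‖μ‖ < 1`. As the spectrum is finite, the supremum is attained.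
-/

open Finset Matrix

theorem Matrix.exists_mulVec_eq_smul_of_mem_spectrum {n K : Type*} [Fintype n] [DecidableEq n]
    [Field K] {A : Matrix n n K} {μ : K} (h : μ ∈ spectrum K A) :
    ∃ x ≠ 0, A *ᵥ x = μ • x := by
  rw [← Matrix.spectrum_toLin', ← Module.End.hasEigenvalue_iff_mem_spectrum] at h
  obtain ⟨x, hx, hx0⟩ := h.exists_hasEigenvector
  exact ⟨x, hx0, by simpa using Module.End.mem_eigenspace_iff.mp hx⟩

theorem two_mul_mul_le_of_sq_eq_one_add {t c x y : ℝ} (ht : t ^ 2 = 1 + c) (hx : 0 ≤ x)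
    (hy : 0 ≤ y) : 2 * t * (x * y) ≤ x ^ 2 + y ^ 2 + c * min (x ^ 2) (y ^ 2) := by
  rcases le_total x y with h | h
  · rw [min_eq_left (pow_le_pow_left₀ hx h 2)]
    nlinarith [sq_nonneg (y - t * x)]
  · rw [min_eq_right (pow_le_pow_left₀ hy h 2)]
    nlinarith [sq_nonneg (x - t * y)]

namespace SimpleGraph

variable {V : Type*}

theorem IsTree.exists_parent {G : SimpleGraph V} (hG : G.IsTree) (r : V) :
    ∃ p : V → V, ∀ u v, G.Adj u v → (u ≠ r ∧ p u = v) ∨ (v ≠ r ∧ p v = u) := by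
  choose f hf hf' using (hG.existsUnique_path · r)
  refine ⟨fun u => (f u).snd, fun u v huv => ?_⟩
  by_cases hv : v ∈ (f u).support
  · refine .inl ⟨?_, (hG.isAcyclic.eq_snd_of_adj_start (hf u) huv hv).symm⟩
    rintro rfl
    rw [← hf' u .nil .nil, Walk.support_nil, List.mem_singleton] at hv
    exact huv.ne hv.symm
  · have hcons : Walk.cons huv.symm (f u) = f v := hf' v _ ((hf u).cons hv)
    refine .inr ⟨?_, by simp [← hcons]⟩
    rintro rfl
    simpa using hcons.trans (hf' v .nil .nil).symm

variable [Fintype V] {G : SimpleGraph V} [DecidableRel G.Adj]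

theorem sum_sum_neighborFinset_comm {M : Type*} [AddCommMonoid M] (f : V → V → M) :
    ∑ u, ∑ v ∈ G.neighborFinset u, f u v = ∑ u, ∑ v ∈ G.neighborFinset u, f v u :=
  Finset.sum_comm' (by simp [adj_comm])

theorem sum_sum_neighborFinset_add (f : V → ℝ) :
    ∑ u, ∑ v ∈ G.neighborFinset u, (f u + f v) = 2 * ∑ u, G.degree u * f u := by
  rw [sum_congr rfl fun u _ => sum_add_distrib, sum_add_distrib,
    ← sum_sum_neighborFinset_comm (fun u _ => f u)]
  simp [card_neighborFinset_eq_degree, two_mul]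

theorem IsTree.sum_sum_neighborFinset_min_le (hG : G.IsTree) (r : V) {b : V → ℝ}
    (hb : ∀ u, 0 ≤ b u) :
    ∑ u, ∑ v ∈ G.neighborFinset u, min (b u) (b v) ≤ 2 * (∑ u, b u - b r) := by
  classical
  obtain ⟨p, hp⟩ := hG.exists_parent r
  -- every edge is charged to its endpoint farther from `r`
  let charge (u v : V) : ℝ := if u ≠ r ∧ p u = v then b u else 0
  have charge_nonneg (u v : V) : 0 ≤ charge u v := by
    unfold charge; split_ifs <;> simp [hb]
  have sum_charge : ∑ u, ∑ v ∈ G.neighborFinset u, charge u v ≤ ∑ u, b u - b r := by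
    calc _ ≤ ∑ u, ∑ v, charge u v := sum_le_sum fun u _ =>
          sum_le_sum_of_subset_of_nonneg (subset_univ _) fun v _ _ => charge_nonneg u v
      _ = ∑ u, b u - b r := by
          simp only [charge, ite_and, sum_ite_irrel, sum_ite_eq, mem_univ, if_true, sum_const_zero]
          rw [← sum_filter, filter_ne', sum_erase_eq_sub (mem_univ r)]
  calc ∑ u, ∑ v ∈ G.neighborFinset u, min (b u) (b v)
      ≤ ∑ u, ∑ v ∈ G.neighborFinset u, (charge u v + charge v u) := by
        gcongr with u _ v hv
        rcases hp u v ((mem_neighborFinset ..).1 hv) with h | h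
        · calc min (b u) (b v) ≤ charge u v := (min_le_left _ _).trans_eq (if_pos h).symm
            _ ≤ _ := le_add_of_nonneg_right (charge_nonneg v u)
        · calc min (b u) (b v) ≤ charge v u := (min_le_right _ _).trans_eq (if_pos h).symm
            _ ≤ _ := le_add_of_nonneg_left (charge_nonneg u v)
    _ = ∑ u, ∑ v ∈ G.neighborFinset u, charge u v
          + ∑ u, ∑ v ∈ G.neighborFinset u, charge u v := by
        simp only [sum_add_distrib]
        congr 1
        exact (sum_sum_neighborFinset_comm charge).symm
    _ ≤ 2 * (∑ u, b u - b r) := by linarith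

theorem IsTree.sqrt_one_add_mul_sum_le (hG : G.IsTree) {c : ℝ} (hc : 0 ≤ c) (r : V)
    {a : V → ℝ} (ha : ∀ u, 0 ≤ a u) :
    √(1 + c) * ∑ u, ∑ v ∈ G.neighborFinset u, a u * a v
      ≤ ∑ u, (c + G.degree u) * a u ^ 2 - c * a r ^ 2 := by
  have ht : √(1 + c) ^ 2 = 1 + c := Real.sq_sqrt (by linarith)
  have hmin := hG.sum_sum_neighborFinset_min_le r (b := (a · ^ 2)) fun u => sq_nonneg _
  have hsplit : ∑ u, (c + G.degree u) * a u ^ 2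
      = c * ∑ u, a u ^ 2 + ∑ u, G.degree u * a u ^ 2 := by
    simp only [add_mul, sum_add_distrib, mul_sum]
  calc √(1 + c) * ∑ u, ∑ v ∈ G.neighborFinset u, a u * a v
      = (∑ u, ∑ v ∈ G.neighborFinset u, 2 * √(1 + c) * (a u * a v)) / 2 := by
        simp only [← mul_sum]; ring
    _ ≤ (∑ u, ∑ v ∈ G.neighborFinset u,
          (a u ^ 2 + a v ^ 2 + c * min (a u ^ 2) (a v ^ 2))) / 2 := by
        gcongr with u _ v _
        exact two_mul_mul_le_of_sq_eq_one_add ht (ha u) (ha v)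
    _ = (2 * ∑ u, G.degree u * a u ^ 2
          + c * ∑ u, ∑ v ∈ G.neighborFinset u, min (a u ^ 2) (a v ^ 2)) / 2 := by
        rw [← sum_sum_neighborFinset_add]
        simp only [sum_add_distrib, mul_sum]
    _ ≤ _ := by linarith [mul_le_mul_of_nonneg_left hmin hc]

end SimpleGraph

section Kg

variable {V : Type} [Fintype V] [DecidableEq V] {G : SimpleGraph V} [DecidableRel G.Adj]

theorem Kg_map_ofReal_mulVec_apply (c : ℝ) (x : V → ℂ) (u : V) :
    ((Kg c G).map Complex.ofReal *ᵥ x) u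
      = (∑ v ∈ G.neighborFinset u, x v) / ((c + G.degree u : ℝ) : ℂ) := by
  rw [← SimpleGraph.adjMatrix_mulVec_apply (α := ℂ), mulVec, mulVec, dotProduct, dotProduct,
    sum_div]
  refine sum_congr rfl fun v _ => ?_
  simp only [Kg, map_apply, of_apply, SimpleGraph.adjMatrix_apply]
  split_ifs <;> simp [div_eq_inv_mul]

theorem norm_mul_sum_le_sum_sum_neighborFinset {c : ℝ} (hc : 0 < c) {μ : ℂ} {x : V → ℂ}
    (hx : (Kg c G).map Complex.ofReal *ᵥ x = μ • x) :
    ‖μ‖ * ∑ u, (c + G.degree u) * ‖x u‖ ^ 2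
      ≤ ∑ u, ∑ v ∈ G.neighborFinset u, ‖x u‖ * ‖x v‖ := by
  have hrow (u : V) :
      ‖μ‖ * (c + G.degree u) * ‖x u‖ ≤ ∑ v ∈ G.neighborFinset u, ‖x v‖ := by
    have hd : 0 < c + (G.degree u : ℝ) := by positivity
    have h := congrFun hx u
    rw [Kg_map_ofReal_mulVec_apply, Pi.smul_apply, smul_eq_mul] at h
    calc ‖μ‖ * (c + G.degree u) * ‖x u‖
        = ‖∑ v ∈ G.neighborFinset u, x v‖ / (c + G.degree u) * (c + G.degree u) := by
          rw [mul_right_comm, ← norm_mul, ← h, norm_div, Complex.norm_real,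
            Real.norm_of_nonneg hd.le]
      _ = ‖∑ v ∈ G.neighborFinset u, x v‖ := div_mul_cancel₀ _ hd.ne'
      _ ≤ ∑ v ∈ G.neighborFinset u, ‖x v‖ := norm_sum_le _ _
  rw [mul_sum]
  gcongr with u
  calc ‖μ‖ * ((c + G.degree u) * ‖x u‖ ^ 2)
        = ‖x u‖ * (‖μ‖ * (c + G.degree u) * ‖x u‖) := by ring
    _ ≤ ‖x u‖ * ∑ v ∈ G.neighborFinset u, ‖x v‖ := by gcongr; exact hrow u
    _ = ∑ v ∈ G.neighborFinset u, ‖x u‖ * ‖x v‖ := mul_sum _ _ _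

theorem SimpleGraph.IsTree.sqrt_one_add_mul_norm_lt_one (hG : G.IsTree) {c : ℝ}
    (hc : 0 < c) {μ : ℂ} {x : V → ℂ} (hx0 : x ≠ 0)
    (hx : (Kg c G).map Complex.ofReal *ᵥ x = μ • x) :
    √(1 + c) * ‖μ‖ < 1 := by
  obtain ⟨r, hr⟩ := Function.ne_iff.mp hx0
  have hW : 0 ≤ ∑ u, (c + G.degree u) * ‖x u‖ ^ 2 := by positivity
  have hA := norm_mul_sum_le_sum_sum_neighborFinset hc hx
  have hB := hG.sqrt_one_add_mul_sum_le hc.le r (a := (‖x ·‖)) fun _ => norm_nonneg _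
  have hr_pos : 0 < c * ‖x r‖ ^ 2 := by positivity
  have hgap : 0 < (1 - √(1 + c) * ‖μ‖) * ∑ u, (c + G.degree u) * ‖x u‖ ^ 2 := by
    linarith [mul_le_mul_of_nonneg_left hA (Real.sqrt_nonneg (1 + c))]
  exact sub_pos.mp (pos_of_mul_pos_left hgap hW)

end Kg

/-- for a finite tree G and c > 0, sr(K_G) < 1/√(1+c). -/
theorem tree_spectral_radius_lt
    {V : Type} [Fintype V] [DecidableEq V] (c : ℝ) (hc : 0 < c)
    (G : SimpleGraph V) [DecidableRel G.Adj] (hG : G.IsTree) :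
    sr (Kg c G) < 1 / Real.sqrt (1 + c) := by
  have hsqrt : 0 < √(1 + c) := Real.sqrt_pos.mpr (by linarith)
  unfold sr
  set S := (fun z : ℂ => ‖z‖) '' spectrum ℂ ((Kg c G).map Complex.ofReal)
  have hbound : ∀ z ∈ S, z < 1 / √(1 + c) := by
    rintro _ ⟨μ, hμ, rfl⟩
    obtain ⟨x, hx0, hx⟩ := exists_mulVec_eq_smul_of_mem_spectrum hμ
    rw [lt_div_iff₀' hsqrt]
    exact hG.sqrt_one_add_mul_norm_lt_one hc hx0 hx
  obtain hS | hS := S.eq_empty_or_nonempty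
  · rw [hS, Real.sSup_empty]
    positivity
  · exact ((finite_spectrum _).image _ |>.csSup_lt_iff hS).2 hbound
end

section
/- Let c > 0, let T be a finite tree, and let v be a vertex of T. Then for every odd k ≥ 1, (K_T^k)_{vv} = 0, and for every even k ≥ 2, 0 ≤ (K_T^k)_{vv} ≤ (1+c)^{−k/2}. -/
open Matrix Finset SimpleGraph
open scoped RealInnerProductSpace

theorem ContinuousLinearMap.norm_pow_apply_le {𝕜 E : Type*} [NontriviallyNormedField 𝕜]
    [SeminormedAddCommGroup E] [NormedSpace 𝕜 E] (T : E →L[𝕜] E) (k : ℕ) (x : E) :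
    ‖(T ^ k) x‖ ≤ ‖T‖ ^ k * ‖x‖ := by
  induction k with
  | zero => simp
  | succ k ih =>
    rw [pow_succ', mul_apply_eq_comp, pow_succ', mul_assoc]
    exact (T.le_opNorm _).trans (by gcongr)

section Matrix

variable {V : Type} [Fintype V] [DecidableEq V]

theorem Matrix.IsHermitian.abs_pow_apply_self_le {S : Matrix V V ℝ} (hS : S.IsHermitian)
    {t : ℝ} (hSt : ∀ x : V → ℝ, |x ⬝ᵥ S *ᵥ x| ≤ t * (x ⬝ᵥ x)) (k : ℕ) (v : V) :
    |(S ^ k) v v| ≤ t ^ k := by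
  set T := toEuclideanCLM (𝕜 := ℝ) S
  have hT : (T : EuclideanSpace ℝ V →ₗ[ℝ] _).IsSymmetric :=
    isSymmetric_toEuclideanLin_iff.mpr hS
  have ht : 0 ≤ t := by
    simpa using (abs_nonneg _).trans (hSt (Pi.single v 1))
  have hnorm : ‖T‖ ≤ t := by
    rw [T.norm_eq_iSup_rayleighQuotient hT]
    refine ciSup_le fun x => ?_
    rw [ContinuousLinearMap.rayleighQuotient, ContinuousLinearMap.reApplyInnerSelf_apply,
      abs_div, abs_sq, real_inner_comm, RCLike.re_to_real, ← real_inner_self_eq_norm_sq,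
      inner_toEuclideanCLM, EuclideanSpace.inner_eq_star_dotProduct]
    simpa using div_le_of_le_mul₀ (dotProduct_self_star_nonneg x.ofLp) ht (hSt x.ofLp)
  set e := EuclideanSpace.single v (1 : ℝ)
  calc |(S ^ k) v v| = |⟪e, (T ^ k) e⟫| := by
        rw [← map_pow, inner_toEuclideanCLM]
        simp [e]
    _ ≤ ‖(T ^ k) e‖ := by
        simpa [e] using abs_real_inner_le_norm e ((T ^ k) e)
    _ ≤ ‖T‖ ^ k * ‖e‖ := T.norm_pow_apply_le k e
    _ ≤ t ^ k := by
        simp only [e, PiLp.norm_single, norm_one, mul_one]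
        gcongr

theorem Matrix.diagonal_inv_mul_mul_diagonal_pow_apply_self {R : Type*} [Field R]
    {a : V → R} (ha : ∀ i, a i ≠ 0) (M : Matrix V V R) (k : ℕ) (v : V) :
    ((diagonal a⁻¹ * M * diagonal a) ^ k) v v = (M ^ k) v v := by
  let u : (Matrix V V R)ˣ := ⟨diagonal a, diagonal a⁻¹, by simp [ha], by simp [ha]⟩
  have hconj : (diagonal a⁻¹ * M * diagonal a) ^ k = diagonal a⁻¹ * M ^ k * diagonal a :=
    u.conj_pow' M k
  rw [hconj, mul_diagonal, diagonal_mul, Pi.inv_apply, mul_comm, ← mul_assoc,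
    mul_inv_cancel₀ (ha v), one_mul]

theorem Matrix.dotProduct_diagonal_mul_mul_diagonal_mulVec {R : Type*} [CommSemiring R]
    (a x : V → R) (A : Matrix V V R) :
    x ⬝ᵥ (diagonal a * A * diagonal a) *ᵥ x = (a * x) ⬝ᵥ A *ᵥ (a * x) := by
  have hmul : diagonal a *ᵥ x = a * x := funext (mulVec_diagonal _ _)
  have hvec : x ᵥ* diagonal a = a * x := funext fun u => by
    rw [vecMul_diagonal, mul_comm]; rfl
  rw [← mulVec_mulVec, ← mulVec_mulVec, hmul, dotProduct_mulVec, hvec]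

theorem Matrix.abs_diagonal_inv_mul_pow_apply_self_le {A : Matrix V V ℝ} (hA : A.IsHermitian)
    {d : V → ℝ} (hd : ∀ u, 0 < d u) {t : ℝ}
    (hAt : ∀ y : V → ℝ, |y ⬝ᵥ A *ᵥ y| ≤ t * ∑ u, d u * y u ^ 2) (k : ℕ) (v : V) :
    |((diagonal d⁻¹ * A) ^ k) v v| ≤ t ^ k := by
  obtain ⟨a, had, ha⟩ : ∃ a : V → ℝ, (∀ u, a u * a u = d u) ∧ ∀ u, a u ≠ 0 :=
    ⟨fun u => √(d u), fun u => Real.mul_self_sqrt (hd u).le,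
      fun u => (Real.sqrt_pos.mpr (hd u)).ne'⟩
  set S := diagonal a⁻¹ * A * diagonal a⁻¹
  have hS : S.IsHermitian := by
    simpa [S] using isHermitian_conjTranspose_mul_mul (diagonal a⁻¹) hA
  have hsim : diagonal d⁻¹ * A = diagonal a⁻¹ * S * diagonal a := by
    ext u w
    simp only [S, mul_diagonal, diagonal_mul, Pi.inv_apply, ← had]
    field_simp [ha u, ha w]
  have hSt (x : V → ℝ) : |x ⬝ᵥ S *ᵥ x| ≤ t * (x ⬝ᵥ x) := by
    have hnorm : ∑ u, d u * (a⁻¹ * x) u ^ 2 = x ⬝ᵥ x :=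
      sum_congr rfl fun u _ => by
        simp only [Pi.mul_apply, Pi.inv_apply, ← had]
        field_simp [ha u]
    rw [dotProduct_diagonal_mul_mul_diagonal_mulVec, ← hnorm]
    exact hAt _
  rw [hsim, diagonal_inv_mul_mul_diagonal_pow_apply_self ha]
  exact hS.abs_pow_apply_self_le hSt k v

theorem Matrix.pow_apply_eq_zero_of_forall_walk_length_ne {R : Type*} [CommSemiring R]
    {G : SimpleGraph V} {M : Matrix V V R} (hM : ∀ u w, ¬G.Adj u w → M u w = 0) (k : ℕ)
    {u w : V} (hk : ∀ p : G.Walk u w, p.length ≠ k) : (M ^ k) u w = 0 := by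
  induction k generalizing w with
  | zero =>
    rw [pow_zero, one_apply_ne]
    rintro rfl
    exact hk .nil rfl
  | succ k ih =>
    rw [pow_succ, mul_apply]
    refine sum_eq_zero fun y _ => ?_
    by_cases hyw : G.Adj y w
    · rw [ih fun p hp => hk (p.concat hyw) (by rw [Walk.length_concat, hp]), zero_mul]
    · rw [hM y w hyw, mul_zero]

theorem Matrix.pow_apply_self_eq_zero_of_colorable_two {R : Type*} [CommSemiring R]
    {G : SimpleGraph V} (hG : G.Colorable 2) {M : Matrix V V R}
    (hM : ∀ u w, ¬G.Adj u w → M u w = 0) {k : ℕ} (hk : Odd k) (v : V) : (M ^ k) v v = 0 :=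
  pow_apply_eq_zero_of_forall_walk_length_ne hM k fun p hp =>
    Nat.not_even_iff_odd.mpr (hp ▸ hk) (two_colorable_iff_forall_loop_even.mp hG v p)

end Matrix

theorem two_mul_abs_mul_le {α β a b : ℝ} (hα : 0 < α) (hαβ : α * β = 1) :
    2 * |a * b| ≤ α * a ^ 2 + β * b ^ 2 := by
  rw [abs_mul, ← sq_abs a, ← sq_abs b]
  nlinarith [sq_nonneg (α * |a| - |b|)]

namespace SimpleGraph

variable {V : Type}

theorem sum_sum_neighborFinset_swap [Fintype V] (G : SimpleGraph V) [DecidableRel G.Adj]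
    {M : Type*} [AddCommMonoid M] (f : V → V → M) :
    ∑ u, ∑ w ∈ G.neighborFinset u, f w u = ∑ u, ∑ w ∈ G.neighborFinset u, f u w :=
  sum_comm' fun u w => by simp [mem_neighborFinset, G.adj_comm]

theorem abs_dotProduct_adjMatrix_mulVec_le [Fintype V] (G : SimpleGraph V) [DecidableRel G.Adj]
    {α : V → V → ℝ} (hα : ∀ u w, G.Adj u w → 0 < α u w ∧ α u w * α w u = 1) (x : V → ℝ) :
    |x ⬝ᵥ G.adjMatrix ℝ *ᵥ x| ≤ ∑ u, (∑ w ∈ G.neighborFinset u, α u w) * x u ^ 2 := by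
  have hamgm : 2 * |x ⬝ᵥ G.adjMatrix ℝ *ᵥ x| ≤
      ∑ u, ∑ w ∈ G.neighborFinset u, (α u w * x u ^ 2 + α w u * x w ^ 2) := by
    calc 2 * |x ⬝ᵥ G.adjMatrix ℝ *ᵥ x|
        = 2 * |∑ u, ∑ w ∈ G.neighborFinset u, x u * x w| := by
          simp only [dotProduct, adjMatrix_mulVec_apply, mul_sum]
      _ ≤ 2 * ∑ u, ∑ w ∈ G.neighborFinset u, |x u * x w| := by
          gcongr
          exact (abs_sum_le_sum_abs _ _).trans (sum_le_sum fun u _ => abs_sum_le_sum_abs _ _)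
      _ = ∑ u, ∑ w ∈ G.neighborFinset u, 2 * |x u * x w| := by simp only [mul_sum]
      _ ≤ _ := sum_le_sum fun u _ => sum_le_sum fun w hw =>
          have h := hα u w ((G.mem_neighborFinset u w).mp hw)
          two_mul_abs_mul_le h.1 h.2
  rw [sum_congr rfl fun u _ => sum_add_distrib, sum_add_distrib,
    G.sum_sum_neighborFinset_swap (fun u w => α u w * x u ^ 2)] at hamgm
  simp only [sum_mul]
  linarith

theorem IsAcyclic.eq_penultimate_of_adj_of_dist_lt [DecidableEq V] {G : SimpleGraph V}
    (hG : G.IsAcyclic) {r u w : V} {p : G.Walk r u} (hp : p.IsPath) (hadj : G.Adj u w)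
    (hlt : G.dist r w < G.dist r u) : w = p.penultimate := by
  obtain ⟨q, hq, hqlen⟩ := (p.reachable.trans hadj.reachable).exists_path_of_dist
  have hu : u ∉ q.support := fun hu =>
    ((G.dist_le (q.takeUntil u hu)).trans (q.length_takeUntil_le_length hu)).not_gt
      (hqlen ▸ hlt)
  exact hG.eq_penultimate_of_adj_end hp hadj
    (hG.mem_support_of_ne_mem_support_of_adj_of_isPath hp hq hadj hu)

theorem IsTree.card_filter_dist_lt_le_one [Fintype V] [DecidableEq V] {G : SimpleGraph V}
    [DecidableRel G.Adj] (hG : G.IsTree) (r u : V) :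
    #{w ∈ G.neighborFinset u | G.dist r w < G.dist r u} ≤ 1 := by
  obtain ⟨p, hp⟩ := (hG.connected r u).exists_isPath
  refine card_le_one.mpr fun w hw w' hw' => ?_
  simp only [mem_filter, mem_neighborFinset] at hw hw'
  rw [hG.isAcyclic.eq_penultimate_of_adj_of_dist_lt hp hw.1 hw.2,
    hG.isAcyclic.eq_penultimate_of_adj_of_dist_lt hp hw'.1 hw'.2]

theorem IsTree.abs_dotProduct_adjMatrix_mulVec_le [Fintype V] [DecidableEq V]
    {G : SimpleGraph V} [DecidableRel G.Adj] (hG : G.IsTree) {c : ℝ} (hc : 0 ≤ c) (x : V → ℝ) :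
    |x ⬝ᵥ G.adjMatrix ℝ *ᵥ x| ≤ (√(1 + c))⁻¹ * ∑ u, (c + G.degree u) * x u ^ 2 := by
  obtain ⟨r⟩ := hG.connected.nonempty
  set s := √(1 + c)
  have hs : 0 < s := Real.sqrt_pos.mpr (by linarith)
  have hss : s * s = 1 + c := Real.mul_self_sqrt (by linarith)
  let α u w : ℝ := if G.dist r w < G.dist r u then s else s⁻¹
  have hα u w (hadj : G.Adj u w) : 0 < α u w ∧ α u w * α w u = 1 := by
    rcases (hG.dist_ne_of_adj r hadj).lt_or_gt with h | h <;>
      simp [α, h, h.not_gt, hs, hs.ne']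
  refine (G.abs_dotProduct_adjMatrix_mulVec_le hα x).trans ?_
  rw [mul_sum]
  refine sum_le_sum fun u _ => ?_
  rw [← mul_assoc]
  gcongr
  set n := #{w ∈ G.neighborFinset u | G.dist r w < G.dist r u}
  set m := #{w ∈ G.neighborFinset u | ¬G.dist r w < G.dist r u}
  have hnm : (n : ℝ) + m = G.degree u := by
    rw [← card_neighborFinset_eq_degree,
      ← card_filter_add_card_filter_not (fun w => G.dist r w < G.dist r u)]
    push_cast; rfl
  have hn : (n : ℝ) ≤ 1 := by exact_mod_cast hG.card_filter_dist_lt_le_one r u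
  have hsum : ∑ w ∈ G.neighborFinset u, α u w = n * s + m * s⁻¹ := by
    simp only [α, sum_ite, sum_const, nsmul_eq_mul]; rfl
  rw [hsum, ← hnm]
  field_simp
  nlinarith

end SimpleGraph

theorem Kg_eq_diagonal_inv_mul_adjMatrix {V : Type} [Fintype V] [DecidableEq V] (c : ℝ)
    (G : SimpleGraph V) [DecidableRel G.Adj] :
    Kg c G = diagonal (fun u => c + (G.degree u : ℝ))⁻¹ * G.adjMatrix ℝ := by
  ext u w
  simp only [Kg, of_apply, diagonal_mul, Pi.inv_apply, div_eq_inv_mul]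

/-- for a finite tree T, vertex v and c > 0: (K_T^k)_{vv} = 0 for
odd k, and 0 ≤ (K_T^{2m})_{vv} ≤ (1+c)^{-m} for even k = 2m ≥ 2. -/
theorem tree_diagonal_power_bounds
    {V : Type} [Fintype V] [DecidableEq V] (c : ℝ) (hc : 0 < c)
    (G : SimpleGraph V) [DecidableRel G.Adj] (hG : G.IsTree) (v : V) :
    (∀ k : ℕ, Odd k → ((Kg c G) ^ k) v v = 0) ∧
    (∀ m : ℕ, 1 ≤ m →
      0 ≤ ((Kg c G) ^ (2 * m)) v v ∧ ((Kg c G) ^ (2 * m)) v v ≤ ((1 + c) ^ m)⁻¹) := by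
  have hd (u : V) : 0 < c + (G.degree u : ℝ) := by positivity
  refine ⟨fun k hk => ?_, fun m _ => ⟨?_, ?_⟩⟩
  · exact pow_apply_self_eq_zero_of_colorable_two hG.colorable_two
      (fun u w h => by simp [Kg, h]) hk v
  · refine pow_apply_nonneg (fun u w => div_nonneg ?_ (hd u).le) _ v v
    rw [adjMatrix_apply]
    split_ifs <;> norm_num
  · have hbound := abs_diagonal_inv_mul_pow_apply_self_le
      (isHermitian_iff_isSymm.mpr G.isSymm_adjMatrix) hd
      (hG.abs_dotProduct_adjMatrix_mulVec_le hc.le) (2 * m) v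
    have hpow : ((√(1 + c))⁻¹) ^ (2 * m) = ((1 + c) ^ m)⁻¹ := by
      rw [pow_mul, inv_pow, Real.sq_sqrt (by positivity), inv_pow]
    rw [← Kg_eq_diagonal_inv_mul_adjMatrix, hpow] at hbound
    exact (le_abs_self _).trans hbound
end
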